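/- For every integer m ≥ 1 the following operator identities hold on smooth functions f : ℝ² → ℝ: (i) for every j with 1 ≤ j ≤ 2m, [∇^m_j, □̃]f = j(2m−j+1)·∇^m_{j−1}f pointwise; (ii) for every j with 0 ≤ j ≤ 2m, [∇^m_j, σ̃]f = (m−j)·∇^m_j f pointwise. -/

import Mathlib

/-- Partial derivative of a real-valued function on `ℝ²` in the direction `v`. -/
noncomputable def pdv (v : ℝ × ℝ) (f : ℝ × ℝ → ℝ) : ℝ × ℝ → ℝ := fun p => fderiv ℝ f p v

/-- Partial derivative with respect to the first coordinate (`x`). -/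
noncomputable def px : (ℝ × ℝ → ℝ) → ℝ × ℝ → ℝ := pdv (1, 0)

/-- Partial derivative with respect to the second coordinate (`y`). -/
noncomputable def py : (ℝ × ℝ → ℝ) → ℝ × ℝ → ℝ := pdv (0, 1)

/-- The operator `□̃f = −∂_x f + ∂_y f`. -/
noncomputable def boxT (f : ℝ × ℝ → ℝ) : ℝ × ℝ → ℝ := fun p => -px f p + py f p

/-- The operator `σ̃f = x∂_x f + y∂_y f + (1/2)f`. -/
noncomputable def sigT (f : ℝ × ℝ → ℝ) : ℝ × ℝ → ℝ :=
  fun p => p.1 * px f p + p.2 * py f p + (1 / 2) * f p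

/-- The operator `τ̃f = ((x²−2xy−y²)/2)∂_x f + ((x²+2xy−y²)/2)∂_y f + ((x−y)/2)f`. -/
noncomputable def tauT (f : ℝ × ℝ → ℝ) : ℝ × ℝ → ℝ :=
  fun p => ((p.1 ^ 2 - 2 * p.1 * p.2 - p.2 ^ 2) / 2) * px f p +
    ((p.1 ^ 2 + 2 * p.1 * p.2 - p.2 ^ 2) / 2) * py f p + ((p.1 - p.2) / 2) * f p

/-- `∇^m_0 = □̃^m` and `∇^m_{j+1} = [∇^m_j, τ̃]`. -/
noncomputable def nablamj (m : ℕ) : ℕ → (ℝ × ℝ → ℝ) → ℝ × ℝ → ℝ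
  | 0, f => boxT^[m] f
  | j + 1, f => nablamj m j (tauT f) - tauT (nablamj m j f)



/-! ### pdv toolkit -/

lemma contDiff_pdv (v : ℝ × ℝ) {f : ℝ × ℝ → ℝ} (hf : ContDiff ℝ (⊤ : ℕ∞) f) :
    ContDiff ℝ (⊤ : ℕ∞) (pdv v f) := by
  unfold pdv
  exact (hf.fderiv_right ((by simp))).clm_apply contDiff_const

lemma diffAt {u : ℝ × ℝ → ℝ} (hu : ContDiff ℝ (⊤ : ℕ∞) u) (p : ℝ × ℝ) : DifferentiableAt ℝ u p :=
  hu.differentiable (by simp) p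

lemma pdv_fun_add (v : ℝ × ℝ) {f g : ℝ × ℝ → ℝ} {p : ℝ × ℝ}
    (hf : DifferentiableAt ℝ f p) (hg : DifferentiableAt ℝ g p) :
    pdv v (fun q => f q + g q) p = pdv v f p + pdv v g p := by
  simp only [pdv, fderiv_fun_add hf hg]; rfl

lemma pdv_fun_neg (v : ℝ × ℝ) {f : ℝ × ℝ → ℝ} {p : ℝ × ℝ} :
    pdv v (fun q => -f q) p = -pdv v f p := by
  simp only [pdv, fderiv_fun_neg]; rfl

lemma pdv_fun_sub (v : ℝ × ℝ) {f g : ℝ × ℝ → ℝ} {p : ℝ × ℝ}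
    (hf : DifferentiableAt ℝ f p) (hg : DifferentiableAt ℝ g p) :
    pdv v (fun q => f q - g q) p = pdv v f p - pdv v g p := by
  simp only [pdv, fderiv_fun_sub hf hg]; rfl

lemma pdv_const_mul (v : ℝ × ℝ) (c : ℝ) {f : ℝ × ℝ → ℝ} {p : ℝ × ℝ}
    (hf : DifferentiableAt ℝ f p) :
    pdv v (fun q => c * f q) p = c * pdv v f p := by
  simp only [pdv, fderiv_const_mul hf]; rfl

lemma pdv_mul (v : ℝ × ℝ) {a f : ℝ × ℝ → ℝ} {p : ℝ × ℝ}
    (ha : DifferentiableAt ℝ a p) (hf : DifferentiableAt ℝ f p) :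
    pdv v (fun q => a q * f q) p = pdv v a p * f p + a p * pdv v f p := by
  simp only [pdv, fderiv_fun_mul ha hf]; simp; ring

lemma pdv_fst (v : ℝ × ℝ) (p : ℝ × ℝ) : pdv v (fun q => q.1) p = v.1 := by
  simp [pdv, fderiv_fst]

lemma pdv_snd (v : ℝ × ℝ) (p : ℝ × ℝ) : pdv v (fun q => q.2) p = v.2 := by
  simp [pdv, fderiv_snd]

lemma pdv_const (v : ℝ × ℝ) (c : ℝ) (p : ℝ × ℝ) : pdv v (fun _ => c) p = 0 := by
  simp [pdv]

lemma pdv_comm {f : ℝ × ℝ → ℝ} (hf : ContDiff ℝ (⊤ : ℕ∞) f) (v w : ℝ × ℝ) (p : ℝ × ℝ) :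
    pdv v (pdv w f) p = pdv w (pdv v f) p := by
  have hd : DifferentiableAt ℝ (fderiv ℝ f) p :=
    ((hf.fderiv_right (m := (⊤ : ℕ∞)) ((by simp))).differentiable (by simp)) p
  have key : ∀ u u' : ℝ × ℝ, pdv u (pdv u' f) p = fderiv ℝ (fderiv ℝ f) p u u' := by
    intro u u'
    show fderiv ℝ (fun q => (fderiv ℝ f q) ((fun _ => u') q)) p u = _
    rw [fderiv_clm_apply hd (differentiableAt_const _)]
    simp
  rw [key, key]
  have symm := (hf.contDiffAt (x := p)).isSymmSndFDerivAt (by rw [minSmoothness_of_isRCLikeNormedField]; exact WithTop.coe_le_coe.mpr le_top)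
  exact symm v w

/-- derivative of a general quadratic polynomial on ℝ² -/
lemma pdv_poly2 (α β γ δ ε : ℝ) (v p : ℝ × ℝ) :
    pdv v (fun q : ℝ × ℝ => α*(q.1*q.1) + β*(q.1*q.2) + γ*(q.2*q.2) + δ*q.1 + ε*q.2) p
      = (2*α*p.1 + β*p.2 + δ)*v.1 + (β*p.1 + 2*γ*p.2 + ε)*v.2 := by
  have h1 : DifferentiableAt ℝ (fun q : ℝ × ℝ => q.1) p := by fun_prop
  have h2 : DifferentiableAt ℝ (fun q : ℝ × ℝ => q.2) p := by fun_prop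
  rw [pdv_fun_add v (by fun_prop) (by fun_prop), pdv_fun_add v (by fun_prop) (by fun_prop),
      pdv_fun_add v (by fun_prop) (by fun_prop), pdv_fun_add v (by fun_prop) (by fun_prop),
      pdv_const_mul v α (by fun_prop), pdv_const_mul v β (by fun_prop),
      pdv_const_mul v γ (by fun_prop), pdv_const_mul v δ h1, pdv_const_mul v ε h2,
      pdv_mul v h1 h1, pdv_mul v h1 h2, pdv_mul v h2 h2, pdv_fst, pdv_snd]
  ring

/-! ### the coefficient functions of tauT -/

lemma pdv_tauA (v p : ℝ × ℝ) :
    pdv v (fun q : ℝ × ℝ => (q.1 ^ 2 - 2 * q.1 * q.2 - q.2 ^ 2) / 2) p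
      = (p.1 - p.2) * v.1 + (-p.1 - p.2) * v.2 := by
  have : (fun q : ℝ × ℝ => (q.1 ^ 2 - 2 * q.1 * q.2 - q.2 ^ 2) / 2)
      = fun q : ℝ × ℝ => (1/2)*(q.1*q.1) + (-1)*(q.1*q.2) + (-(1/2))*(q.2*q.2) + 0*q.1 + 0*q.2 :=
    funext fun q => by ring
  rw [this, pdv_poly2]; ring

lemma pdv_tauB (v p : ℝ × ℝ) :
    pdv v (fun q : ℝ × ℝ => (q.1 ^ 2 + 2 * q.1 * q.2 - q.2 ^ 2) / 2) p
      = (p.1 + p.2) * v.1 + (p.1 - p.2) * v.2 := by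
  have : (fun q : ℝ × ℝ => (q.1 ^ 2 + 2 * q.1 * q.2 - q.2 ^ 2) / 2)
      = fun q : ℝ × ℝ => (1/2)*(q.1*q.1) + (1:ℝ)*(q.1*q.2) + (-(1/2))*(q.2*q.2) + 0*q.1 + 0*q.2 :=
    funext fun q => by ring
  rw [this, pdv_poly2]; ring

lemma pdv_tauC (v p : ℝ × ℝ) :
    pdv v (fun q : ℝ × ℝ => (q.1 - q.2) / 2) p = (1/2) * v.1 + (-(1/2)) * v.2 := by
  have : (fun q : ℝ × ℝ => (q.1 - q.2) / 2)
      = fun q : ℝ × ℝ => (0:ℝ)*(q.1*q.1) + 0*(q.1*q.2) + 0*(q.2*q.2) + (1/2)*q.1 + (-(1/2))*q.2 :=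
    funext fun q => by ring
  rw [this, pdv_poly2]; ring

/-! ### smoothness of the operators -/

lemma contDiff_boxT {f : ℝ × ℝ → ℝ} (hf : ContDiff ℝ (⊤ : ℕ∞) f) : ContDiff ℝ (⊤ : ℕ∞) (boxT f) := by
  have hx := contDiff_pdv (1,0) hf
  have hy := contDiff_pdv (0,1) hf
  unfold boxT px py
  fun_prop

lemma contDiff_sigT {f : ℝ × ℝ → ℝ} (hf : ContDiff ℝ (⊤ : ℕ∞) f) : ContDiff ℝ (⊤ : ℕ∞) (sigT f) := by
  have hx := contDiff_pdv (1,0) hf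
  have hy := contDiff_pdv (0,1) hf
  unfold sigT px py
  fun_prop

lemma contDiff_tauT {f : ℝ × ℝ → ℝ} (hf : ContDiff ℝ (⊤ : ℕ∞) f) : ContDiff ℝ (⊤ : ℕ∞) (tauT f) := by
  have hx := contDiff_pdv (1,0) hf
  have hy := contDiff_pdv (0,1) hf
  unfold tauT px py
  simp only [div_eq_mul_inv]
  fun_prop

lemma contDiff_nablamj (m j : ℕ) {f : ℝ × ℝ → ℝ} (hf : ContDiff ℝ (⊤ : ℕ∞) f) :
    ContDiff ℝ (⊤ : ℕ∞) (nablamj m j f) := by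
  induction j generalizing f with
  | zero =>
      show ContDiff ℝ (⊤ : ℕ∞) (boxT^[m] f)
      induction m generalizing f with
      | zero => simpa using hf
      | succ n ih =>
          rw [Function.iterate_succ_apply]
          exact ih (contDiff_boxT hf)
  | succ j ih =>
      show ContDiff ℝ (⊤ : ℕ∞) (nablamj m j (tauT f) - tauT (nablamj m j f))
      exact (ih (contDiff_tauT hf)).sub (contDiff_tauT (ih hf))

/-! ### expansions of first derivatives of the operators, in `pdv` language -/

lemma pdv_opL (v : ℝ × ℝ) {a b c g : ℝ × ℝ → ℝ} {p : ℝ × ℝ}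
    (ha : ContDiff ℝ (⊤ : ℕ∞) a) (hb : ContDiff ℝ (⊤ : ℕ∞) b) (hc : ContDiff ℝ (⊤ : ℕ∞) c) (hg : ContDiff ℝ (⊤ : ℕ∞) g) :
    pdv v (fun q => a q * pdv (1,0) g q + b q * pdv (0,1) g q + c q * g q) p
      = pdv v a p * pdv (1,0) g p + a p * pdv v (pdv (1,0) g) p
        + pdv v b p * pdv (0,1) g p + b p * pdv v (pdv (0,1) g) p
        + pdv v c p * g p + c p * pdv v g p := by
  have hgx := contDiff_pdv (1,0) hg
  have hgy := contDiff_pdv (0,1) hg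
  rw [pdv_fun_add v (f := fun q => a q * pdv (1,0) g q + b q * pdv (0,1) g q)
        (g := fun q => c q * g q)
        (((diffAt ha p).mul (diffAt hgx p)).add ((diffAt hb p).mul (diffAt hgy p)))
        ((diffAt hc p).mul (diffAt hg p)),
      pdv_fun_add v (f := fun q => a q * pdv (1,0) g q) (g := fun q => b q * pdv (0,1) g q)
        ((diffAt ha p).mul (diffAt hgx p)) ((diffAt hb p).mul (diffAt hgy p)),
      pdv_mul v (diffAt ha p) (diffAt hgx p), pdv_mul v (diffAt hb p) (diffAt hgy p),
      pdv_mul v (diffAt hc p) (diffAt hg p)]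
  ring

lemma pdv_boxT (v : ℝ × ℝ) {g : ℝ × ℝ → ℝ} (hg : ContDiff ℝ (⊤ : ℕ∞) g) (p : ℝ × ℝ) :
    pdv v (boxT g) p = -pdv v (pdv (1,0) g) p + pdv v (pdv (0,1) g) p := by
  have hgx := contDiff_pdv (1,0) hg
  have hgy := contDiff_pdv (0,1) hg
  have h : boxT g = fun q => -pdv (1,0) g q + pdv (0,1) g q := rfl
  rw [h, pdv_fun_add v (f := fun q => -pdv (1,0) g q) (diffAt hgx p).neg (diffAt hgy p), pdv_fun_neg]

lemma pdv_sigT (v : ℝ × ℝ) {g : ℝ × ℝ → ℝ} (hg : ContDiff ℝ (⊤ : ℕ∞) g) (p : ℝ × ℝ) :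
    pdv v (sigT g) p = v.1 * pdv (1,0) g p + p.1 * pdv v (pdv (1,0) g) p
      + v.2 * pdv (0,1) g p + p.2 * pdv v (pdv (0,1) g) p + (1/2) * pdv v g p := by
  have h : sigT g = fun q => (fun q : ℝ × ℝ => q.1) q * pdv (1,0) g q
      + (fun q : ℝ × ℝ => q.2) q * pdv (0,1) g q + (fun _ : ℝ × ℝ => (1/2 : ℝ)) q * g q := rfl
  rw [h, pdv_opL v (by fun_prop) (by fun_prop) contDiff_const hg, pdv_fst, pdv_snd, pdv_const]
  ring

lemma pdv_tauT (v : ℝ × ℝ) {g : ℝ × ℝ → ℝ} (hg : ContDiff ℝ (⊤ : ℕ∞) g) (p : ℝ × ℝ) :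
    pdv v (tauT g) p
      = ((p.1 - p.2) * v.1 + (-p.1 - p.2) * v.2) * pdv (1,0) g p
        + ((p.1 ^ 2 - 2 * p.1 * p.2 - p.2 ^ 2) / 2) * pdv v (pdv (1,0) g) p
        + ((p.1 + p.2) * v.1 + (p.1 - p.2) * v.2) * pdv (0,1) g p
        + ((p.1 ^ 2 + 2 * p.1 * p.2 - p.2 ^ 2) / 2) * pdv v (pdv (0,1) g) p
        + ((1/2) * v.1 + (-(1/2)) * v.2) * g p
        + ((p.1 - p.2) / 2) * pdv v g p := by
  have h : tauT g = fun q => (fun q : ℝ × ℝ => (q.1 ^ 2 - 2 * q.1 * q.2 - q.2 ^ 2) / 2) q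
      * pdv (1,0) g q
      + (fun q : ℝ × ℝ => (q.1 ^ 2 + 2 * q.1 * q.2 - q.2 ^ 2) / 2) q * pdv (0,1) g q
      + (fun q : ℝ × ℝ => (q.1 - q.2) / 2) q * g q := rfl
  have hA : ContDiff ℝ (⊤ : ℕ∞) (fun q : ℝ × ℝ => (q.1 ^ 2 - 2 * q.1 * q.2 - q.2 ^ 2) / 2) := by
    simp only [div_eq_mul_inv]; fun_prop
  have hB : ContDiff ℝ (⊤ : ℕ∞) (fun q : ℝ × ℝ => (q.1 ^ 2 + 2 * q.1 * q.2 - q.2 ^ 2) / 2) := by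
    simp only [div_eq_mul_inv]; fun_prop
  have hC : ContDiff ℝ (⊤ : ℕ∞) (fun q : ℝ × ℝ => (q.1 - q.2) / 2) := by
    simp only [div_eq_mul_inv]; fun_prop
  rw [h, pdv_opL v hA hB hC hg, pdv_tauA, pdv_tauB, pdv_tauC]

/-! ### the three bracket relations -/

lemma rel1 {g : ℝ × ℝ → ℝ} (hg : ContDiff ℝ (⊤ : ℕ∞) g) (p : ℝ × ℝ) :
    boxT (sigT g) p - sigT (boxT g) p = boxT g p := by
  have h1 : boxT (sigT g) p = -pdv (1,0) (sigT g) p + pdv (0,1) (sigT g) p := rfl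
  have h2 : sigT (boxT g) p = p.1 * pdv (1,0) (boxT g) p + p.2 * pdv (0,1) (boxT g) p
      + (1/2) * boxT g p := rfl
  have h3 : boxT g p = -pdv (1,0) g p + pdv (0,1) g p := rfl
  rw [h1, h2, pdv_sigT (1,0) hg p, pdv_sigT (0,1) hg p, pdv_boxT (1,0) hg p, pdv_boxT (0,1) hg p,
      pdv_comm hg (0,1) (1,0) p, h3]
  ring

lemma rel2 {g : ℝ × ℝ → ℝ} (hg : ContDiff ℝ (⊤ : ℕ∞) g) (p : ℝ × ℝ) :
    sigT (tauT g) p - tauT (sigT g) p = tauT g p := by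
  have h1 : sigT (tauT g) p = p.1 * pdv (1,0) (tauT g) p + p.2 * pdv (0,1) (tauT g) p
      + (1/2) * tauT g p := rfl
  have h2 : tauT (sigT g) p = ((p.1 ^ 2 - 2 * p.1 * p.2 - p.2 ^ 2) / 2) * pdv (1,0) (sigT g) p
      + ((p.1 ^ 2 + 2 * p.1 * p.2 - p.2 ^ 2) / 2) * pdv (0,1) (sigT g) p
      + ((p.1 - p.2) / 2) * sigT g p := rfl
  have h3 : tauT g p = ((p.1 ^ 2 - 2 * p.1 * p.2 - p.2 ^ 2) / 2) * pdv (1,0) g p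
      + ((p.1 ^ 2 + 2 * p.1 * p.2 - p.2 ^ 2) / 2) * pdv (0,1) g p
      + ((p.1 - p.2) / 2) * g p := rfl
  have h4 : sigT g p = p.1 * pdv (1,0) g p + p.2 * pdv (0,1) g p + (1/2) * g p := rfl
  rw [h1, h2, pdv_tauT (1,0) hg p, pdv_tauT (0,1) hg p, pdv_sigT (1,0) hg p, pdv_sigT (0,1) hg p,
      pdv_comm hg (0,1) (1,0) p, h3, h4]
  ring

lemma rel3 {g : ℝ × ℝ → ℝ} (hg : ContDiff ℝ (⊤ : ℕ∞) g) (p : ℝ × ℝ) :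
    tauT (boxT g) p - boxT (tauT g) p = 2 * sigT g p := by
  have h1 : tauT (boxT g) p = ((p.1 ^ 2 - 2 * p.1 * p.2 - p.2 ^ 2) / 2) * pdv (1,0) (boxT g) p
      + ((p.1 ^ 2 + 2 * p.1 * p.2 - p.2 ^ 2) / 2) * pdv (0,1) (boxT g) p
      + ((p.1 - p.2) / 2) * boxT g p := rfl
  have h2 : boxT (tauT g) p = -pdv (1,0) (tauT g) p + pdv (0,1) (tauT g) p := rfl
  have h3 : boxT g p = -pdv (1,0) g p + pdv (0,1) g p := rfl
  have h4 : sigT g p = p.1 * pdv (1,0) g p + p.2 * pdv (0,1) g p + (1/2) * g p := rfl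
  rw [h1, h2, pdv_boxT (1,0) hg p, pdv_boxT (0,1) hg p, pdv_tauT (1,0) hg p, pdv_tauT (0,1) hg p,
      pdv_comm hg (0,1) (1,0) p, h3, h4]
  ring

/-! ### pointwise linearity of the operators on smooth functions -/

lemma boxT_add {u v : ℝ × ℝ → ℝ} (hu : ContDiff ℝ (⊤ : ℕ∞) u) (hv : ContDiff ℝ (⊤ : ℕ∞) v) (p : ℝ × ℝ) :
    boxT (fun q => u q + v q) p = boxT u p + boxT v p := by
  show -pdv (1,0) (fun q => u q + v q) p + pdv (0,1) (fun q => u q + v q) p = _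
  rw [pdv_fun_add (1,0) (diffAt hu p) (diffAt hv p), pdv_fun_add (0,1) (diffAt hu p) (diffAt hv p)]
  show _ = (-pdv (1,0) u p + pdv (0,1) u p) + (-pdv (1,0) v p + pdv (0,1) v p)
  ring

lemma boxT_const_mul (c : ℝ) {u : ℝ × ℝ → ℝ} (hu : ContDiff ℝ (⊤ : ℕ∞) u) (p : ℝ × ℝ) :
    boxT (fun q => c * u q) p = c * boxT u p := by
  show -pdv (1,0) (fun q => c * u q) p + pdv (0,1) (fun q => c * u q) p = _
  rw [pdv_const_mul (1,0) c (diffAt hu p), pdv_const_mul (0,1) c (diffAt hu p)]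
  show _ = c * (-pdv (1,0) u p + pdv (0,1) u p)
  ring

lemma sigT_sub {u v : ℝ × ℝ → ℝ} (hu : ContDiff ℝ (⊤ : ℕ∞) u) (hv : ContDiff ℝ (⊤ : ℕ∞) v) (p : ℝ × ℝ) :
    sigT (fun q => u q - v q) p = sigT u p - sigT v p := by
  show p.1 * pdv (1,0) (fun q => u q - v q) p + p.2 * pdv (0,1) (fun q => u q - v q) p
      + (1/2) * (u p - v p) = _
  rw [pdv_fun_sub (1,0) (diffAt hu p) (diffAt hv p), pdv_fun_sub (0,1) (diffAt hu p) (diffAt hv p)]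
  show _ = (p.1 * pdv (1,0) u p + p.2 * pdv (0,1) u p + (1/2) * u p)
      - (p.1 * pdv (1,0) v p + p.2 * pdv (0,1) v p + (1/2) * v p)
  ring

lemma tauT_add {u v : ℝ × ℝ → ℝ} (hu : ContDiff ℝ (⊤ : ℕ∞) u) (hv : ContDiff ℝ (⊤ : ℕ∞) v) (p : ℝ × ℝ) :
    tauT (fun q => u q + v q) p = tauT u p + tauT v p := by
  show ((p.1 ^ 2 - 2 * p.1 * p.2 - p.2 ^ 2) / 2) * pdv (1,0) (fun q => u q + v q) p
      + ((p.1 ^ 2 + 2 * p.1 * p.2 - p.2 ^ 2) / 2) * pdv (0,1) (fun q => u q + v q) p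
      + ((p.1 - p.2) / 2) * (u p + v p) = _
  rw [pdv_fun_add (1,0) (diffAt hu p) (diffAt hv p), pdv_fun_add (0,1) (diffAt hu p) (diffAt hv p)]
  show _ = (((p.1 ^ 2 - 2 * p.1 * p.2 - p.2 ^ 2) / 2) * pdv (1,0) u p
      + ((p.1 ^ 2 + 2 * p.1 * p.2 - p.2 ^ 2) / 2) * pdv (0,1) u p + ((p.1 - p.2) / 2) * u p)
      + (((p.1 ^ 2 - 2 * p.1 * p.2 - p.2 ^ 2) / 2) * pdv (1,0) v p
      + ((p.1 ^ 2 + 2 * p.1 * p.2 - p.2 ^ 2) / 2) * pdv (0,1) v p + ((p.1 - p.2) / 2) * v p)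
  ring

lemma tauT_const_mul (c : ℝ) {u : ℝ × ℝ → ℝ} (hu : ContDiff ℝ (⊤ : ℕ∞) u) (p : ℝ × ℝ) :
    tauT (fun q => c * u q) p = c * tauT u p := by
  show ((p.1 ^ 2 - 2 * p.1 * p.2 - p.2 ^ 2) / 2) * pdv (1,0) (fun q => c * u q) p
      + ((p.1 ^ 2 + 2 * p.1 * p.2 - p.2 ^ 2) / 2) * pdv (0,1) (fun q => c * u q) p
      + ((p.1 - p.2) / 2) * (c * u p) = _
  rw [pdv_const_mul (1,0) c (diffAt hu p), pdv_const_mul (0,1) c (diffAt hu p)]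
  show _ = c * (((p.1 ^ 2 - 2 * p.1 * p.2 - p.2 ^ 2) / 2) * pdv (1,0) u p
      + ((p.1 ^ 2 + 2 * p.1 * p.2 - p.2 ^ 2) / 2) * pdv (0,1) u p + ((p.1 - p.2) / 2) * u p)
  ring

lemma boxT_iter_add (n : ℕ) {u v : ℝ × ℝ → ℝ} (hu : ContDiff ℝ (⊤ : ℕ∞) u) (hv : ContDiff ℝ (⊤ : ℕ∞) v)
    (p : ℝ × ℝ) : boxT^[n] (fun q => u q + v q) p = boxT^[n] u p + boxT^[n] v p := by
  induction n generalizing u v p with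
  | zero => simp
  | succ n ih =>
      rw [Function.iterate_succ_apply, Function.iterate_succ_apply, Function.iterate_succ_apply,
        show boxT (fun q => u q + v q) = fun q => boxT u q + boxT v q from
          funext fun q => boxT_add hu hv q]
      exact ih (contDiff_boxT hu) (contDiff_boxT hv) p

lemma boxT_iter_const_mul (n : ℕ) (c : ℝ) {u : ℝ × ℝ → ℝ} (hu : ContDiff ℝ (⊤ : ℕ∞) u) (p : ℝ × ℝ) :
    boxT^[n] (fun q => c * u q) p = c * boxT^[n] u p := by
  induction n generalizing u p with
  | zero => simp
  | succ n ih =>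
      rw [Function.iterate_succ_apply, Function.iterate_succ_apply,
        show boxT (fun q => c * u q) = fun q => c * boxT u q from
          funext fun q => boxT_const_mul c hu q]
      exact ih (contDiff_boxT hu) p

lemma nablamj_add (m j : ℕ) {u v : ℝ × ℝ → ℝ} (hu : ContDiff ℝ (⊤ : ℕ∞) u) (hv : ContDiff ℝ (⊤ : ℕ∞) v)
    (p : ℝ × ℝ) : nablamj m j (fun q => u q + v q) p = nablamj m j u p + nablamj m j v p := by
  induction j generalizing u v p with
  | zero => exact boxT_iter_add m hu hv p
  | succ j ih =>
      show nablamj m j (tauT (fun q => u q + v q)) p - tauT (nablamj m j (fun q => u q + v q)) p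
        = (nablamj m j (tauT u) p - tauT (nablamj m j u) p)
          + (nablamj m j (tauT v) p - tauT (nablamj m j v) p)
      rw [show tauT (fun q => u q + v q) = fun q => tauT u q + tauT v q from
            funext fun q => tauT_add hu hv q,
          show nablamj m j (fun q => u q + v q) = fun q => nablamj m j u q + nablamj m j v q from
            funext fun q => ih hu hv q,
          tauT_add (contDiff_nablamj m j hu) (contDiff_nablamj m j hv) p,
          ih (contDiff_tauT hu) (contDiff_tauT hv) p]
      ring

lemma nablamj_const_mul (m j : ℕ) (c : ℝ) {u : ℝ × ℝ → ℝ} (hu : ContDiff ℝ (⊤ : ℕ∞) u) (p : ℝ × ℝ) :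
    nablamj m j (fun q => c * u q) p = c * nablamj m j u p := by
  induction j generalizing u p with
  | zero => exact boxT_iter_const_mul m c hu p
  | succ j ih =>
      show nablamj m j (tauT (fun q => c * u q)) p - tauT (nablamj m j (fun q => c * u q)) p
        = c * (nablamj m j (tauT u) p - tauT (nablamj m j u) p)
      rw [show tauT (fun q => c * u q) = fun q => c * tauT u q from
            funext fun q => tauT_const_mul c hu q,
          show nablamj m j (fun q => c * u q) = fun q => c * nablamj m j u q from
            funext fun q => ih hu q,
          tauT_const_mul c (contDiff_nablamj m j hu) p,
          ih (contDiff_tauT hu) p]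
      ring

lemma nablamj_sub (m j : ℕ) {u v : ℝ × ℝ → ℝ} (hu : ContDiff ℝ (⊤ : ℕ∞) u) (hv : ContDiff ℝ (⊤ : ℕ∞) v)
    (p : ℝ × ℝ) : nablamj m j (fun q => u q - v q) p = nablamj m j u p - nablamj m j v p := by
  have h : (fun q => u q - v q) = fun q => u q + (-1 : ℝ) * v q := funext fun q => by ring
  rw [h, nablamj_add m j hu (by fun_prop) p, nablamj_const_mul m j (-1) hv p]
  ring

/-- boxT_sub -/
lemma boxT_sub {u v : ℝ × ℝ → ℝ} (hu : ContDiff ℝ (⊤ : ℕ∞) u) (hv : ContDiff ℝ (⊤ : ℕ∞) v) (p : ℝ × ℝ) :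
    boxT (fun q => u q - v q) p = boxT u p - boxT v p := by
  show -pdv (1,0) (fun q => u q - v q) p + pdv (0,1) (fun q => u q - v q) p = _
  rw [pdv_fun_sub (1,0) (diffAt hu p) (diffAt hv p), pdv_fun_sub (0,1) (diffAt hu p) (diffAt hv p)]
  show _ = (-pdv (1,0) u p + pdv (0,1) u p) - (-pdv (1,0) v p + pdv (0,1) v p)
  ring

/-- `[□̃^n, σ̃] = n □̃^n` on smooth functions. -/
lemma boxT_iter_sigT (n : ℕ) {g : ℝ × ℝ → ℝ} (hg : ContDiff ℝ (⊤ : ℕ∞) g) (p : ℝ × ℝ) :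
    boxT^[n] (sigT g) p - sigT (boxT^[n] g) p = (n : ℝ) * boxT^[n] g p := by
  induction n generalizing g p with
  | zero => simp
  | succ n ih =>
      rw [Function.iterate_succ_apply,
        show boxT (sigT g) = fun q => sigT (boxT g) q + boxT g q from
          funext fun q => by have := rel1 hg q; linarith,
        boxT_iter_add n (contDiff_sigT (contDiff_boxT hg)) (contDiff_boxT hg) p,
        Function.iterate_succ_apply boxT n g]
      have h1 := ih (contDiff_boxT hg) p
      push_cast
      linarith

lemma main_commutators (m : ℕ) : ∀ j : ℕ,
    (∀ g : ℝ × ℝ → ℝ, ContDiff ℝ (⊤ : ℕ∞) g → ∀ p : ℝ × ℝ,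
      nablamj m j (boxT g) p - boxT (nablamj m j g) p
        = ((j : ℝ) * (2 * (m : ℝ) - (j : ℝ) + 1)) * nablamj m (j - 1) g p) ∧
    (∀ g : ℝ × ℝ → ℝ, ContDiff ℝ (⊤ : ℕ∞) g → ∀ p : ℝ × ℝ,
      nablamj m j (sigT g) p - sigT (nablamj m j g) p
        = ((m : ℝ) - (j : ℝ)) * nablamj m j g p) := by
  intro j
  induction j with
  | zero =>
      constructor
      · intro g hg p
        show boxT^[m] (boxT g) p - boxT (boxT^[m] g) p = _
        rw [← Function.iterate_succ_apply, Function.iterate_succ_apply']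
        simp
      · intro g hg p
        simpa [nablamj] using boxT_iter_sigT m hg p
  | succ j ih =>
      obtain ⟨hB, hS⟩ := ih
      constructor
      · -- the □̃ commutator
        intro g hg p
        have hTg := contDiff_tauT hg
        have hSg := contDiff_sigT hg
        have hNg := contDiff_nablamj m j hg
        have hNTg := contDiff_nablamj m j hTg
        have hTNg := contDiff_tauT hNg
        have hBTg := contDiff_boxT hTg
        have h2Sg : ContDiff ℝ (⊤ : ℕ∞) (fun q => (2:ℝ) * sigT g q) := contDiff_const.mul hSg
        have hBNg := contDiff_boxT hNg
        have hN'g := contDiff_nablamj m (j-1) hg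
        have hcN'g : ContDiff ℝ (⊤ : ℕ∞)
            (fun q => ((j : ℝ) * (2 * (m : ℝ) - (j : ℝ) + 1)) * nablamj m (j-1) g q) :=
          contDiff_const.mul hN'g
        have h1' : tauT (boxT g) = fun q => boxT (tauT g) q + (2:ℝ) * sigT g q :=
          funext fun q => by have := rel3 hg q; linarith
        have h2' : nablamj m j (boxT g)
            = fun q => boxT (nablamj m j g) q
              + ((j : ℝ) * (2 * (m : ℝ) - (j : ℝ) + 1)) * nablamj m (j-1) g q :=
          funext fun q => by have := hB g hg q; linarith
        have f1 : nablamj m j (tauT (boxT g)) p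
            = nablamj m j (boxT (tauT g)) p + 2 * nablamj m j (sigT g) p := by
          rw [h1']
          exact (nablamj_add m j hBTg h2Sg p).trans
            (by rw [nablamj_const_mul m j 2 hSg p])
        have f2 := hB (tauT g) hTg p
        have f3 := hS g hg p
        have f4 : tauT (nablamj m j (boxT g)) p
            = tauT (boxT (nablamj m j g)) p
              + ((j : ℝ) * (2 * (m : ℝ) - (j : ℝ) + 1)) * tauT (nablamj m (j-1) g) p := by
          rw [h2']
          exact (tauT_add hBNg hcN'g p).trans
            (by rw [tauT_const_mul _ hN'g p])
        have f5 := rel3 hNg p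
        have f6 : boxT (nablamj m (j+1) g) p
            = boxT (nablamj m j (tauT g)) p - boxT (tauT (nablamj m j g)) p :=
          boxT_sub hNTg hTNg p
        have f7 : ((j : ℝ) * (2 * (m : ℝ) - (j : ℝ) + 1))
              * (nablamj m (j-1) (tauT g) p - tauT (nablamj m (j-1) g) p)
            = ((j : ℝ) * (2 * (m : ℝ) - (j : ℝ) + 1)) * nablamj m j g p := by
          cases j with
          | zero => norm_num
          | succ k => rfl
        show nablamj m j (tauT (boxT g)) p - tauT (nablamj m j (boxT g)) p
            - boxT (nablamj m (j+1) g) p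
          = ((↑(j+1) : ℝ) * (2 * (m : ℝ) - (↑(j+1) : ℝ) + 1))
            * (nablamj m j g) p
        push_cast
        push_cast at f2 f3 f4 f7
        linear_combination f1 - f4 - f6 + f2 + 2 * f3 - f5 + f7
      · -- the σ̃ commutator
        intro g hg p
        have hTg := contDiff_tauT hg
        have hSg := contDiff_sigT hg
        have hNg := contDiff_nablamj m j hg
        have hNTg := contDiff_nablamj m j hTg
        have hTNg := contDiff_tauT hNg
        have hSTg := contDiff_sigT hTg
        have hSNg := contDiff_sigT hNg
        have hcNg : ContDiff ℝ (⊤ : ℕ∞) (fun q => ((m : ℝ) - (j : ℝ)) * nablamj m j g q) :=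
          contDiff_const.mul hNg
        have h1' : tauT (sigT g) = fun q => sigT (tauT g) q - tauT g q :=
          funext fun q => by have := rel2 hg q; linarith
        have h2' : nablamj m j (sigT g)
            = fun q => sigT (nablamj m j g) q + ((m : ℝ) - (j : ℝ)) * nablamj m j g q :=
          funext fun q => by have := hS g hg q; linarith
        have e1 : nablamj m j (tauT (sigT g)) p
            = nablamj m j (sigT (tauT g)) p - nablamj m j (tauT g) p := by
          rw [h1']
          exact nablamj_sub m j hSTg hTg p
        have e2 := hS (tauT g) hTg p
        have e3 : tauT (nablamj m j (sigT g)) p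
            = tauT (sigT (nablamj m j g)) p + ((m : ℝ) - (j : ℝ)) * tauT (nablamj m j g) p := by
          rw [h2']
          exact (tauT_add hSNg hcNg p).trans (by rw [tauT_const_mul _ hNg p])
        have e4 := rel2 hNg p
        have e5 : sigT (nablamj m (j+1) g) p
            = sigT (nablamj m j (tauT g)) p - sigT (tauT (nablamj m j g)) p :=
          sigT_sub hNTg hTNg p
        show nablamj m j (tauT (sigT g)) p - tauT (nablamj m j (sigT g)) p
            - sigT (nablamj m (j+1) g) p
          = ((m : ℝ) - (↑(j+1) : ℝ)) * (nablamj m j (tauT g) p - tauT (nablamj m j g) p)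
        push_cast
        push_cast at e2 e3
        linear_combination e1 + e2 - e3 + e4 - e5

/-- Commutation relations: `[∇^m_j, □̃] = j(2m−j+1)∇^m_{j−1}` for `1 ≤ j ≤ 2m`, and
`[∇^m_j, σ̃] = (m−j)∇^m_j` for `0 ≤ j ≤ 2m`, on smooth functions. -/
theorem nablamj_commutators (m : ℕ) (hm : 1 ≤ m) (f : ℝ × ℝ → ℝ) (hf : ContDiff ℝ (⊤ : ℕ∞) f) :
    (∀ j : ℕ, 1 ≤ j → j ≤ 2 * m → ∀ p : ℝ × ℝ,
      nablamj m j (boxT f) p - boxT (nablamj m j f) p =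
        ((j : ℝ) * (2 * (m : ℝ) - (j : ℝ) + 1)) * nablamj m (j - 1) f p) ∧
    (∀ j : ℕ, j ≤ 2 * m → ∀ p : ℝ × ℝ,
      nablamj m j (sigT f) p - sigT (nablamj m j f) p =
        ((m : ℝ) - (j : ℝ)) * nablamj m j f p) := by
  constructor
  · intro j _ _ p
    exact (main_commutators m j).1 f hf p
  · intro j _ p
    exact (main_commutators m j).2 f hf p
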